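/- Let Ψ : [0,T] → [0,∞) be continuous and let K(t) = sup_{0≤s≤T} Ψ(s) − sup_{t≤s≤T} Ψ(s). Then ∫₀ᵀ 𝟙_{Ψ(t) = 0} dK(t) = 0. -/

import Mathlib

/-!
With `M t = sup_{[t,T]} Ψ` we have `K = M 0 - M` on `[0,T]`. If `Ψ t < M t`, the supremum over
`[t,T]` is attained strictly to the right of `t`, so `M`, hence `K`, is constant near `t`: such
times carry no `dK`-mass. The remaining zeros of `Ψ` have `M t = Ψ t = 0`, so they lie in a single
level set of `K`, and a continuous Stieltjes function gives no mass to its level sets.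
-/

open MeasureTheory Set Filter Topology

namespace StieltjesFunction

variable (κ : StieltjesFunction ℝ)

theorem measure_Icc_of_continuous (hκ : Continuous κ) (a b : ℝ) :
    κ.measure (Icc a b) = ENNReal.ofReal (κ b - κ a) := by
  rw [κ.measure_Icc, hκ.continuousAt.continuousWithinAt.leftLim_eq]

theorem measure_eq_zero_of_isCompact_of_forall_eq (hκ : Continuous κ) {S : Set ℝ}
    (hS : IsCompact S) {c : ℝ} (h : ∀ x ∈ S, κ x = c) : κ.measure S = 0 := by
  rcases S.eq_empty_or_nonempty with rfl | hne
  · exact measure_empty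
  refine measure_mono_null (subset_Icc_csInf_csSup hS.bddBelow hS.bddAbove) ?_
  rw [κ.measure_Icc_of_continuous hκ, h _ (hS.sSup_mem hne), h _ (hS.sInf_mem hne), sub_self,
    ENNReal.ofReal_zero]

theorem measure_preimage_singleton (hκ : Continuous κ) (c : ℝ) : κ.measure (κ ⁻¹' {c}) = 0 := by
  refine measure_null_of_locally_null _ fun x _ => ⟨κ ⁻¹' {c} ∩ Icc (x - 1) (x + 1), ?_, ?_⟩
  · exact inter_mem_nhdsWithin _ (Icc_mem_nhds (by linarith) (by linarith))
  · exact κ.measure_eq_zero_of_isCompact_of_forall_eq hκ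
      (isCompact_Icc.inter_left (isClosed_singleton.preimage hκ)) fun _ hx => hx.1

theorem measure_eq_zero_of_eventually_eq (hκ : Continuous κ) {S : Set ℝ}
    (h : ∀ t ∈ S, ∀ᶠ x in 𝓝[S] t, κ x = κ t) : κ.measure S = 0 :=
  measure_null_of_locally_null S fun t ht => ⟨_, h t ht, κ.measure_preimage_singleton hκ (κ t)⟩

end StieltjesFunction

noncomputable section

def runningSup (Ψ : ℝ → ℝ) (T t : ℝ) : ℝ :=
  sSup (Ψ '' Icc t T)

variable {Ψ : ℝ → ℝ} {T t : ℝ}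

theorem le_runningSup (hΨ : Continuous Ψ) {y : ℝ} (hy : y ∈ Icc t T) : Ψ y ≤ runningSup Ψ T t :=
  le_csSup (isCompact_Icc.image hΨ).bddAbove (mem_image_of_mem Ψ hy)

theorem runningSup_le (ht : t ≤ T) {c : ℝ} (h : ∀ y ∈ Icc t T, Ψ y ≤ c) :
    runningSup Ψ T t ≤ c :=
  csSup_le ((nonempty_Icc.2 ht).image Ψ) (forall_mem_image.2 h)

theorem exists_eq_runningSup (hΨ : Continuous Ψ) (ht : t ≤ T) :
    ∃ y ∈ Icc t T, Ψ y = runningSup Ψ T t :=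
  (isCompact_Icc.image hΨ).sSup_mem ((nonempty_Icc.2 ht).image Ψ)

theorem eventually_runningSup_eq (hΨ : Continuous Ψ) (ht : t ≤ T)
    (hlt : Ψ t < runningSup Ψ T t) : ∀ᶠ x in 𝓝 t, runningSup Ψ T x = runningSup Ψ T t := by
  obtain ⟨y, hy, hΨy⟩ := exists_eq_runningSup hΨ ht
  have hty : t < y := hy.1.lt_of_ne (by rintro rfl; exact hlt.ne hΨy)
  obtain ⟨a, hat, hbelow⟩ := exists_Ioc_subset_of_mem_nhds
    ((isOpen_lt hΨ continuous_const).mem_nhds hlt) ⟨t - 1, by linarith⟩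
  filter_upwards [Ioo_mem_nhds hat hty] with x hx
  refine le_antisymm (runningSup_le (hx.2.le.trans hy.2) fun z hz => ?_)
    (hΨy.ge.trans (le_runningSup hΨ ⟨hx.2.le, hy.2⟩))
  rcases le_or_gt t z with htz | hzt
  · exact le_runningSup hΨ ⟨htz, hz.2⟩
  · exact (hbelow ⟨hx.1.trans_le hz.1, hzt.le⟩).le

variable {κ : StieltjesFunction ℝ} {s C : ℝ}

theorem measure_setOf_lt_runningSup (hΨ : Continuous Ψ) (hκ : Continuous κ)
    (hκM : ∀ t ∈ Icc s T, κ t = C - runningSup Ψ T t) :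
    κ.measure {t ∈ Icc s T | Ψ t < runningSup Ψ T t} = 0 := by
  refine κ.measure_eq_zero_of_eventually_eq hκ ?_
  rintro t ⟨ht, hlt⟩
  filter_upwards [self_mem_nhdsWithin,
    nhdsWithin_le_nhds (eventually_runningSup_eq hΨ ht.2 hlt)] with x hx hMx
  rw [hκM x hx.1, hκM t ht, hMx]

theorem measure_levelSet_inter_Icc (hΨ : Continuous Ψ) (hκ : Continuous κ)
    (hκM : ∀ t ∈ Icc s T, κ t = C - runningSup Ψ T t) (c : ℝ) :
    κ.measure ({t | Ψ t = c} ∩ Icc s T) = 0 := by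
  have hsubset : {t | Ψ t = c} ∩ Icc s T ⊆
      {t ∈ Icc s T | Ψ t < runningSup Ψ T t} ∪ κ ⁻¹' {C - c} := by
    rintro t ⟨hΨt, ht⟩
    rcases (le_runningSup hΨ ⟨le_rfl, ht.2⟩).lt_or_eq with hlt | heq
    · exact Or.inl ⟨ht, hlt⟩
    · exact Or.inr (by rw [mem_preimage, hκM t ht, ← heq, hΨt, mem_singleton_iff])
  exact measure_mono_null hsubset (measure_union_null
    (measure_setOf_lt_runningSup hΨ hκ hκM) (κ.measure_preimage_singleton hκ _))

end

theorem compensator_not_charging_zero_set_general (T : ℝ)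
    (Ψ : ℝ → ℝ) (hΨcont : Continuous Ψ)
    (K : ℝ → ℝ)
    (hK : ∀ t, K t = sSup (Ψ '' Icc 0 T) - sSup (Ψ '' Icc t T)) :
    ∀ κ : StieltjesFunction ℝ, Continuous ⇑κ → EqOn (⇑κ) K (Icc 0 T) →
      (∫ t in Icc 0 T, Set.indicator {t : ℝ | Ψ t = 0} (fun _ => (1 : ℝ)) t ∂κ.measure)
        = 0 := by
  intro κ hκcont hκK
  have hnull : κ.measure.restrict (Icc 0 T) {t | Ψ t = 0} = 0 := by
    rw [Measure.restrict_apply' measurableSet_Icc]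
    exact measure_levelSet_inter_Icc hΨcont hκcont (fun t ht => (hκK ht).trans (hK t)) 0
  exact integral_eq_zero_of_ae (indicator_meas_zero hnull)

/-- The compensator `K(t) = sup_{[0,T]} Ψ − sup_{[t,T]} Ψ` does not charge the set where
`Ψ` vanishes: `∫₀ᵀ 𝟙_{Ψ(t)=0} dK(t) = 0`. -/
theorem compensator_not_charging_zero_set (T : ℝ) (hT : 0 < T)
    (Ψ : ℝ → ℝ) (hΨcont : Continuous Ψ) (hΨpos : ∀ t, 0 ≤ Ψ t)
    (K : ℝ → ℝ)
    (hK : ∀ t, K t = sSup (Ψ '' Icc 0 T) - sSup (Ψ '' Icc t T)) :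
    ∀ κ : StieltjesFunction ℝ, Continuous ⇑κ → EqOn (⇑κ) K (Icc 0 T) →
      (∫ t in Icc 0 T, Set.indicator {t : ℝ | Ψ t = 0} (fun _ => (1 : ℝ)) t ∂κ.measure)
        = 0 :=
  compensator_not_charging_zero_set_general T Ψ hΨcont K hK
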